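/- arXiv:0908.2193 — 4 statements merged into one kernel-verified Lean document; each statement's English description precedes it below -/
import Mathlib

section
/- Let c > 2√a₁ and let w be a monotonically increasing KPP wave with speed c. Then there exists a constant b_w > 0 such that (b - w(ξ))·e^{-((c - √(c² + 4b₁))/2)·ξ} → b_w as ξ → +∞. -/
/-!
Write `u = b - w`. The wave equation becomes `u'' - c u' - b₁ u = h` with
`h = f(w) - b₁ u = O(u²)`, and `μ < 0 < μ⁺` are the roots of `λ² - c λ - b₁`. The unstable
component `p = u' - μ u` solves `p' = μ⁺ p + h`; it is bounded above and cannot tend to `-∞`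
(else `w' → ∞`), so it is the bounded solution `p(ξ) = -∫_ξ^∞ e^{μ⁺ (ξ - t)} h(t) dt`, whence
`|p| ≤ K u² / μ⁺`. For large `ξ` this gives `w' ≥ -μ u / 2`, so `u` is integrable, and
`φ = u e^{-μ ξ}` satisfies `|φ'| = |p| e^{-μ ξ} ≤ (K / μ⁺) u φ`: `log φ` has an integrable
derivative, so `φ` tends to a positive limit.
-/

open Filter

/-- A KPP wave with speed `c`: a C² solution of `w'' - c w' + f(w) = 0` on ℝ
with `w → 0` at `-∞` and `w → b` at `+∞`. -/
def IsKPPWave (b c : ℝ) (f w : ℝ → ℝ) : Prop :=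
  ContDiff ℝ 2 w ∧
  (∀ ξ : ℝ, deriv (deriv w) ξ - c * deriv w ξ + f (w ξ) = 0) ∧
  Tendsto w atBot (nhds 0) ∧ Tendsto w atTop (nhds b)

open Set MeasureTheory Real Topology

theorem exists_abs_sub_sub_mul_le_sq {f : ℝ → ℝ} {a b d : ℝ} (hab : a < b)
    (hf : ContDiffOn ℝ 2 f (Icc a b)) (hd : HasDerivWithinAt f d (Icc a b) b) :
    ∃ K, ∀ x ∈ Icc a b, |f x - f b - d * (x - b)| ≤ K * (x - b) ^ 2 := by
  -- Mathlib's Taylor bound expands at the left endpoint, so reflect `f` through the origin.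
  have hmaps : MapsTo (fun y : ℝ => -y) (Icc (-b) (-a)) (Icc a b) :=
    fun y hy => ⟨by linarith [hy.2], by linarith [hy.1]⟩
  have hg : ContDiffOn ℝ (1 + 1) (fun y => f (-y)) (Icc (-b) (-a)) :=
    hf.comp contDiff_neg.contDiffOn hmaps
  obtain ⟨K, hK⟩ := exists_taylor_mean_remainder_bound (n := 1) (by linarith) hg
  have hgd : derivWithin (fun y => f (-y)) (Icc (-b) (-a)) (-b) = -d := by
    have hd' : HasDerivWithinAt f d (Icc a b) (-(-b)) := by rwa [neg_neg]
    have := hd'.comp (-b) (hasDerivAt_neg (-b)).hasDerivWithinAt hmaps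
    rw [mul_neg_one] at this
    exact this.derivWithin (uniqueDiffOn_Icc (by linarith) _ (left_mem_Icc.2 (by linarith)))
  refine ⟨K, fun x hx => ?_⟩
  have := hK (-x) ⟨by linarith [hx.2], by linarith [hx.1]⟩
  simp only [taylorWithinEval_succ, taylor_within_zero_eval, zero_add, iteratedDerivWithin_one,
    hgd, Nat.factorial_zero, Nat.cast_one, Nat.cast_zero, pow_one, smul_eq_mul,
    Real.norm_eq_abs] at this
  convert this using 1 <;> ring_nf

theorem exists_pos_tendsto_of_abs_deriv_le_mul {φ φ' g : ℝ → ℝ} {a : ℝ}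
    (hφ : ∀ t, HasDerivAt φ (φ' t) t) (hpos : ∀ t, 0 < φ t)
    (hle : ∀ t > a, |φ' t| ≤ g t * φ t) (hg : IntegrableOn g (Ioi a)) :
    ∃ L, 0 < L ∧ Tendsto φ atTop (𝓝 L) := by
  have hlog : ∀ t, HasDerivAt (fun s => log (φ s)) (φ' t / φ t) t :=
    fun t => (hφ t).log (hpos t).ne'
  have hmeas : AEStronglyMeasurable (fun t => φ' t / φ t) (volume.restrict (Ioi a)) := by
    rw [show (fun t => φ' t / φ t) = deriv (fun s => log (φ s)) from
      funext fun t => (hlog t).deriv.symm]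
    exact (measurable_deriv _).aestronglyMeasurable
  have hint : IntegrableOn (fun t => φ' t / φ t) (Ioi a) := by
    refine hg.mono' hmeas ((ae_restrict_iff' measurableSet_Ioi).2 (.of_forall fun t ht => ?_))
    rw [norm_div, Real.norm_eq_abs, Real.norm_eq_abs, abs_of_pos (hpos t),
      div_le_iff₀ (hpos t)]
    exact hle t ht
  have hlim := tendsto_limUnder_of_hasDerivAt_of_integrableOn_Ioi (fun t _ => hlog t) hint
  exact ⟨_, exp_pos _, ((continuous_exp.tendsto _).comp hlim).congr fun t => exp_log (hpos t)⟩

theorem eq_zero_of_tendsto_mul_exp_neg_mul {k L M : ℝ} {p : ℝ → ℝ} (hk : 0 < k)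
    (hψ : Tendsto (fun t => p t * exp (-k * t)) atTop (𝓝 L))
    (hM : ∀ᶠ t in atTop, p t ≤ M) (hbot : ¬ Tendsto p atTop atBot) : L = 0 := by
  have hexp : Tendsto (fun t => exp (k * t)) atTop atTop :=
    tendsto_exp_atTop.comp (tendsto_id.const_mul_atTop hk)
  have hp : (fun t => p t * exp (-k * t) * exp (k * t)) = p := funext fun t => by
    rw [mul_assoc, ← exp_add]; simp
  rcases lt_trichotomy L 0 with hL | hL | hL
  · exact absurd (hp ▸ hψ.neg_mul_atTop hL hexp) hbot
  · exact hL
  · obtain ⟨t, ht, htM⟩ := ((hp ▸ hψ.pos_mul_atTop hL hexp).eventually_gt_atTop M |>.and hM).exists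
    exact absurd htM (not_le.2 ht)

theorem abs_le_div_of_hasDerivAt_eq_mul_add {k a B M : ℝ} {p g : ℝ → ℝ} (hk : 0 < k)
    (hp : ∀ t, HasDerivAt p (k * p t + g t) t) (hg : ∀ t ≥ a, |g t| ≤ B)
    (hM : ∀ t ≥ a, p t ≤ M) (hbot : ¬ Tendsto p atTop atBot) : |p a| ≤ B / k := by
  set ψ : ℝ → ℝ := fun t => p t * exp (-k * t)
  have hψ : ∀ t, HasDerivAt ψ (g t * exp (-k * t)) t := fun t => by
    have := (hp t).fun_mul ((hasDerivAt_id t).const_mul (-k)).exp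
    exact this.congr_deriv (by simp only [id]; ring)
  have hgmeas : Measurable g := by
    rw [show g = fun t => deriv p t - k * p t from
      funext fun t => by rw [(hp t).deriv]; ring]
    exact (measurable_deriv p).sub (measurable_const.mul
      (Differentiable.continuous fun t => (hp t).differentiableAt).measurable)
  have hexp_int : IntegrableOn (fun t => B * exp (-k * t)) (Ioi a) :=
    (integrableOn_exp_mul_Ioi (neg_lt_zero.2 hk) a).const_mul B
  have hbound : ∀ᵐ t ∂volume.restrict (Ioi a), ‖g t * exp (-k * t)‖ ≤ B * exp (-k * t) :=
    (ae_restrict_iff' measurableSet_Ioi).2 (.of_forall fun t ht => by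
      rw [norm_mul, Real.norm_eq_abs, Real.norm_of_nonneg (exp_pos _).le]
      exact mul_le_mul_of_nonneg_right (hg t (le_of_lt ht)) (exp_pos _).le)
  have hint : IntegrableOn (fun t => g t * exp (-k * t)) (Ioi a) :=
    hexp_int.mono' (hgmeas.mul (by fun_prop)).aestronglyMeasurable hbound
  have hlim := tendsto_limUnder_of_hasDerivAt_of_integrableOn_Ioi (fun t _ => hψ t) hint
  have hL := eq_zero_of_tendsto_mul_exp_neg_mul hk hlim
    (eventually_atTop.2 ⟨a, hM⟩) hbot
  rw [hL] at hlim
  have hrepr := integral_Ioi_of_hasDerivAt_of_tendsto' (fun t _ => hψ t) hint hlim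
  have hψa : |ψ a| ≤ B * exp (-k * a) / k := by
    calc |ψ a| = ‖∫ t in Ioi a, g t * exp (-k * t)‖ := by
          rw [hrepr, zero_sub, Real.norm_eq_abs, abs_neg]
      _ ≤ ∫ t in Ioi a, B * exp (-k * t) := norm_integral_le_of_norm_le hexp_int hbound
      _ = B * exp (-k * a) / k := by
          rw [integral_const_mul, integral_exp_mul_Ioi (neg_lt_zero.2 hk)]
          field_simp
  calc |p a| = |ψ a| * exp (k * a) := by
        simp only [ψ, abs_mul, abs_of_pos (exp_pos _), mul_assoc, ← exp_add]; simp
    _ ≤ B * exp (-k * a) / k * exp (k * a) := by gcongr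
    _ = B / k := by rw [div_mul_eq_mul_div, mul_assoc, ← exp_add]; simp

theorem StrictMono.lt_of_tendsto_atTop {f : ℝ → ℝ} {b : ℝ} (hf : StrictMono f)
    (h : Tendsto f atTop (𝓝 b)) (t : ℝ) : f t < b :=
  (hf (lt_add_one t)).trans_le (hf.monotone.ge_of_tendsto h (t + 1))

theorem tendsto_atTop_of_tendsto_deriv_atTop {f : ℝ → ℝ} (hf : Differentiable ℝ f)
    (h : Tendsto (deriv f) atTop atTop) : Tendsto f atTop atTop := by
  obtain ⟨A, hA⟩ := eventually_atTop.1 (h.eventually_ge_atTop 1)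
  have hgrowth : ∀ y ≥ A, 1 * (y - A) ≤ f y - f A :=
    fun y hy => (convex_Ici A).mul_sub_le_image_sub_of_le_deriv hf.continuous.continuousOn
      hf.differentiableOn (fun x hx => hA x (interior_Ici (a := A) ▸ hx).le) A self_mem_Ici y hy hy
  refine tendsto_atTop_mono' atTop (eventually_atTop.2 ⟨A, fun y hy => ?_⟩)
    (tendsto_atTop_add_const_left atTop (f A - A) tendsto_id)
  simp only [id]
  linarith [hgrowth y hy]

namespace IsKPPWave

variable {b b₁ c μ μp K : ℝ} {f w : ℝ → ℝ}

theorem tendsto_atTop (hw : IsKPPWave b c f w) : Tendsto w atTop (𝓝 b) :=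
  hw.2.2.2

theorem differentiable (hw : IsKPPWave b c f w) : Differentiable ℝ w :=
  hw.1.differentiable (by norm_num)

theorem hasDerivAt_deriv (hw : IsKPPWave b c f w) (t : ℝ) :
    HasDerivAt (deriv w) (c * deriv w t - f (w t)) t := by
  have hC1 : ContDiff ℝ 1 (deriv w) := (contDiff_succ_iff_deriv.1 hw.1).2.2
  exact (hC1.differentiable one_ne_zero t).hasDerivAt.congr_deriv (by linarith [hw.2.1 t])

theorem hasDerivAt_unstable_component (hw : IsKPPWave b c f w) (hsum : μ + μp = c)
    (hprod : μ * μp = -b₁) (t : ℝ) :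
    HasDerivAt (fun s : ℝ => -(deriv w s) - μ * (b - w s))
      (μp * (-(deriv w t) - μ * (b - w t)) + (f (w t) - b₁ * (b - w t))) t := by
  refine ((hw.hasDerivAt_deriv t).neg.sub
    (((hw.differentiable t).hasDerivAt.const_sub b).const_mul μ)).congr_deriv ?_
  linear_combination deriv w t * hsum + (b - w t) * hprod

theorem eventually_abs_unstable_component_le (hw : IsKPPWave b c f w) (hmono : StrictMono w)
    (hμ : μ < 0) (hμp : 0 < μp) (hsum : μ + μp = c) (hprod : μ * μp = -b₁)
    (hK : ∀ᶠ x in 𝓝[<] b, |f x - b₁ * (b - x)| ≤ K * (b - x) ^ 2) :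
    ∀ᶠ ξ in atTop, |-(deriv w ξ) - μ * (b - w ξ)| ≤ K * (b - w ξ) ^ 2 / μp := by
  have hlt := hmono.lt_of_tendsto_atTop hw.tendsto_atTop
  have hwlt : Tendsto w atTop (𝓝[<] b) :=
    tendsto_nhdsWithin_iff.2 ⟨hw.tendsto_atTop, .of_forall hlt⟩
  obtain ⟨Ξ, hΞ⟩ := eventually_atTop.1 (hwlt.eventually hK)
  have hK0 : 0 ≤ K :=
    nonneg_of_mul_nonneg_left ((abs_nonneg _).trans (hΞ Ξ le_rfl)) (pow_pos (sub_pos.2 (hlt Ξ)) 2)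
  have hbot : ¬ Tendsto (fun s => -(deriv w s) - μ * (b - w s)) atTop atBot := fun h => by
    refine not_tendsto_nhds_of_tendsto_atTop
      (tendsto_atTop_of_tendsto_deriv_atTop hw.differentiable ?_) b hw.tendsto_atTop
    refine tendsto_atTop_mono (fun t => ?_) (tendsto_neg_atBot_atTop.comp h)
    have := mul_neg_of_neg_of_pos hμ (sub_pos.2 (hlt t))
    simp only [Function.comp_apply]
    linarith [hmono.monotone.deriv_nonneg (x := t)]
  refine eventually_atTop.2 ⟨Ξ, fun ξ hξ => abs_le_div_of_hasDerivAt_eq_mul_add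
    (p := fun s => -(deriv w s) - μ * (b - w s)) (M := -μ * (b - w ξ)) hμp
    (hw.hasDerivAt_unstable_component hsum hprod) (fun t ht => ?_) (fun t ht => ?_) hbot⟩
  · have hwt := hmono.monotone ht
    calc |f (w t) - b₁ * (b - w t)| ≤ K * (b - w t) ^ 2 := hΞ t (hξ.trans ht)
      _ ≤ K * (b - w ξ) ^ 2 := by gcongr; linarith [hlt t]
  · have hwt := hmono.monotone ht
    have := hmono.monotone.deriv_nonneg (x := t)
    nlinarith

theorem exists_pos_tendsto_sub_mul_exp (hw : IsKPPWave b c f w) (hmono : StrictMono w)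
    (hμ : μ < 0) (hμp : 0 < μp) (hsum : μ + μp = c) (hprod : μ * μp = -b₁)
    (hK : ∀ᶠ x in 𝓝[<] b, |f x - b₁ * (b - x)| ≤ K * (b - x) ^ 2) :
    ∃ L, 0 < L ∧ Tendsto (fun t => (b - w t) * exp (-(μ * t))) atTop (𝓝 L) := by
  have hlt := hmono.lt_of_tendsto_atTop hw.tendsto_atTop
  have hsmall : ∀ᶠ t in atTop, K * (b - w t) ≤ -(μ * μp) / 2 := by
    have : Tendsto (fun t => K * (b - w t)) atTop (𝓝 (K * (b - b))) :=
      (tendsto_const_nhds.sub hw.tendsto_atTop).const_mul K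
    rw [sub_self, mul_zero] at this
    exact this.eventually_le_const (by nlinarith)
  obtain ⟨Ξ, hΞ⟩ := eventually_atTop.1
    ((hw.eventually_abs_unstable_component_le hmono hμ hμp hsum hprod hK).and hsmall)
  have hdecay : ∀ t ≥ Ξ, b - w t ≤ 2 / -μ * deriv w t := fun t ht => by
    obtain ⟨hp, hKu⟩ := hΞ t ht
    have hu := sub_pos.2 (hlt t)
    have hquad : K * (b - w t) ^ 2 / μp ≤ -μ * (b - w t) / 2 := by
      rw [div_le_iff₀ hμp]; nlinarith
    rw [div_mul_eq_mul_div, le_div_iff₀ (by linarith)]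
    linarith [le_abs_self (-(deriv w t) - μ * (b - w t))]
  have hint : IntegrableOn (fun t => b - w t) (Ioi Ξ) := by
    have hw'int := integrableOn_Ioi_deriv_of_nonneg' (a := Ξ)
      (fun t _ => (hw.differentiable t).hasDerivAt) (fun t _ => hmono.monotone.deriv_nonneg)
      hw.tendsto_atTop
    refine (hw'int.const_mul (2 / -μ)).mono'
      (continuous_const.sub hw.differentiable.continuous).aestronglyMeasurable
      ((ae_restrict_iff' measurableSet_Ioi).2 (.of_forall fun t ht => ?_))
    rw [Real.norm_of_nonneg (sub_pos.2 (hlt t)).le]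
    exact hdecay t (le_of_lt ht)
  refine exists_pos_tendsto_of_abs_deriv_le_mul
    (φ' := fun t => (-(deriv w t) - μ * (b - w t)) * exp (-(μ * t)))
    (fun t => (((hw.differentiable t).hasDerivAt.const_sub b).mul
      ((hasDerivAt_id t).const_mul μ).fun_neg.exp).congr_deriv (by simp only [id]; ring))
    (fun t => mul_pos (sub_pos.2 (hlt t)) (exp_pos _)) (fun t ht => ?_) (hint.const_mul (K / μp))
  rw [abs_mul, abs_of_pos (exp_pos _)]
  calc |-(deriv w t) - μ * (b - w t)| * exp (-(μ * t))
      ≤ K * (b - w t) ^ 2 / μp * exp (-(μ * t)) := by gcongr; exact (hΞ t (le_of_lt ht)).1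
    _ = K / μp * (b - w t) * ((b - w t) * exp (-(μ * t))) := by ring

end IsKPPWave

theorem kpp_decay_at_plus_infty_noncritical_general
    (b b₁ : ℝ) (hb : 0 < b) (hb₁ : 0 < b₁)
    (f : ℝ → ℝ) (hfC2 : ContDiffOn ℝ 2 f (Set.Icc 0 b))
    (hfb : f b = 0)
    (hf'b : deriv f b = -b₁)
    (c : ℝ)
    (w : ℝ → ℝ) (hmono : StrictMono w) (hw : IsKPPWave b c f w) :
    ∃ bw : ℝ, 0 < bw ∧
      Tendsto (fun ξ : ℝ => (b - w ξ) * Real.exp (-((c - Real.sqrt (c ^ 2 + 4 * b₁)) / 2 * ξ)))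
        atTop (nhds bw) := by
  set s := √(c ^ 2 + 4 * b₁)
  have hs : |c| < s := by
    rw [← Real.sqrt_sq_eq_abs]
    exact Real.sqrt_lt_sqrt (sq_nonneg c) (by linarith)
  have hs2 : s ^ 2 = c ^ 2 + 4 * b₁ := Real.sq_sqrt (by positivity)
  have hfd : HasDerivAt f (-b₁) b :=
    hf'b ▸ (differentiableAt_of_deriv_ne_zero (by linarith)).hasDerivAt
  obtain ⟨K, hK⟩ := exists_abs_sub_sub_mul_le_sq hb hfC2 hfd.hasDerivWithinAt
  have hK' : ∀ᶠ x in 𝓝[<] b, |f x - b₁ * (b - x)| ≤ K * (b - x) ^ 2 :=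
    mem_of_superset (Icc_mem_nhdsLT hb) fun x hx =>
      calc |f x - b₁ * (b - x)| = |f x - f b - -b₁ * (x - b)| := by rw [hfb]; ring_nf
        _ ≤ K * (x - b) ^ 2 := hK x hx
        _ = K * (b - x) ^ 2 := by ring
  exact hw.exists_pos_tendsto_sub_mul_exp hmono (μp := (c + s) / 2)
    (by linarith [le_abs_self c]) (by linarith [neg_abs_le c]) (by ring)
    (by linear_combination -hs2 / 4) hK'

theorem kpp_decay_at_plus_infty_noncritical
    (b a₁ b₁ : ℝ) (hb : 0 < b) (ha₁ : 0 < a₁) (hb₁ : 0 < b₁)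
    (f : ℝ → ℝ) (hfC2 : ContDiffOn ℝ 2 f (Set.Icc 0 b))
    (hf0 : f 0 = 0) (hfb : f b = 0)
    (hfpos : ∀ x ∈ Set.Ioo 0 b, 0 < f x)
    (hf'0 : deriv f 0 = a₁) (hf'b : deriv f b = -b₁)
    (c : ℝ) (hc : 2 * Real.sqrt a₁ < c)
    (w : ℝ → ℝ) (hmono : StrictMono w) (hw : IsKPPWave b c f w) :
    ∃ bw : ℝ, 0 < bw ∧
      Tendsto (fun ξ : ℝ => (b - w ξ) * Real.exp (-((c - Real.sqrt (c ^ 2 + 4 * b₁)) / 2 * ξ)))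
        atTop (nhds bw) :=
  kpp_decay_at_plus_infty_noncritical_general b b₁ hb hb₁ f hfC2 hfb hf'b c w hmono hw
end

section
/- Fix c ≥ 2√α, fix l with 0 < l < 1 - k + α k, and let v̌ : ℝ → ℝ be a C² solution of equation (E2) with speed c satisfying 0 < v̌(ξ) < (1 + kK* - K*)/(1 + kK* - lK*) for all ξ ∈ ℝ. Then the pair (u̲, v̲) with u̲ = K*·l·v̌ and v̲ = v̌ is a lower solution of (TW) with speed c: u̲'' - c u̲' - (K* - u̲)(1 - α - (K* - u̲ + v̲)/(1 + k(K* - u̲))) ≥ 0 and v̲'' - c v̲' + v̲(1 - (K* - u̲ + v̲)/(1 + k(K* - u̲))) = v̲²·kK*(1 - l)/(1 + kK*(1 - l v̲)) ≥ 0 on ℝ, with (u̲, v̲)(ξ) → (0, 0) as ξ → -∞ and the limit of (u̲, v̲) at +∞ equal to (K*l·(1 + kK* - K*)/(1 + kK* - lK*), (1 + kK* - K*)/(1 + kK* - lK*)), which is ≤ (K*, 1) componentwise. -/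
/-!
Write `D = 1 - k + αk`, so that `K* D = 1 - α`, and `P = 1 + kK*(1 - l v̌)`, which is the
denominator `1 + k(K* - u̲)` along `u̲ = K* l v̌`. Equation (E2) says exactly that
`v̌'' - c v̌' = -v̌ ((1 + kK* - K*) - (1 + kK* - lK*) v̌) / P`. Substituting this, both residuals of
(TW) become rational functions of `v̌` over `P`: the `v`-residual is `v̌² kK*(1 - l) / P`, and the
`u`-residual is `K* v̌ / P` times a factor whose product with `D` is
`((1 - l(1 - α)) D - lα) + (1 - l(1 - α)) l v̌ k(1 - α)`, nonnegative since `l < D`.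
The bound `v̌ < (1 + kK* - K*)/(1 + kK* - lK*)` keeps `l v̌ ≤ 1`, hence `P > 0`.
-/

open Filter

/-- The equilibrium value `K* = (1 - α)/(1 - k + αk)`. -/
noncomputable def Kstar (α k : ℝ) : ℝ := (1 - α) / (1 - k + α * k)

/-- A traveling wave solution of system (TW) with speed `c`. -/
def IsTravelingWave (α k c : ℝ) (u v : ℝ → ℝ) : Prop :=
  ContDiff ℝ 2 u ∧ ContDiff ℝ 2 v ∧
  (∀ ξ : ℝ, deriv (deriv u) ξ - c * deriv u ξ -
      (Kstar α k - u ξ) *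
        (1 - α - (Kstar α k - u ξ + v ξ) / (1 + k * (Kstar α k - u ξ))) = 0) ∧
  (∀ ξ : ℝ, deriv (deriv v) ξ - c * deriv v ξ +
      v ξ * (1 - (Kstar α k - u ξ + v ξ) / (1 + k * (Kstar α k - u ξ))) = 0) ∧
  Tendsto u atBot (nhds 0) ∧ Tendsto v atBot (nhds 0) ∧
  Tendsto u atTop (nhds (Kstar α k)) ∧ Tendsto v atTop (nhds 1)

section Reaction

variable {α k l K w : ℝ}

theorem E2_equilibrium_num_mul (hK : K * (1 - k + α * k) = 1 - α) :
    (1 + k * K - K) * (1 - k + α * k) = α := by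
  linear_combination (k - 1) * hK

theorem E2_equilibrium_den_mul (hK : K * (1 - k + α * k) = 1 - α) :
    (1 + k * K - l * K) * (1 - k + α * k) = 1 - l * (1 - α) := by
  linear_combination (k - l) * hK

theorem E2_reaction_eq (hK : K * (1 - k + α * k) = 1 - α) (hD : 1 - k + α * k ≠ 0)
    (hA : 1 + k * K - K ≠ 0) :
    α / ((1 - k + α * k) * (1 + k * K * (1 - l * w))) *
        (w * (1 - (1 + k * K - l * K) / (1 + k * K - K) * w)) =
      w * (1 + k * K - K - (1 + k * K - l * K) * w) / (1 + k * K * (1 - l * w)) := by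
  have hα := E2_equilibrium_num_mul hK
  set D := 1 - k + α * k
  rw [← hα, mul_comm _ D, mul_div_mul_left _ _ hD]
  field_simp

theorem TW_u_reaction_eq (hK : K * (1 - k + α * k) = 1 - α)
    (hP : 1 + k * K * (1 - l * w) ≠ 0) :
    (K - K * l * w) * (1 - α - (K - K * l * w + w) / (1 + k * (K - K * l * w))) =
      -(K * (1 - l * w) * w * (1 - l * (1 - α))) / (1 + k * K * (1 - l * w)) := by
  have h : 1 - α - (K - K * l * w + w) / (1 + k * K * (1 - l * w)) =
      -(w * (1 - l * (1 - α))) / (1 + k * K * (1 - l * w)) := by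
    rw [eq_div_iff hP, sub_mul, div_mul_cancel₀ _ hP]
    linear_combination (l * w - 1) * hK
  rw [show 1 + k * (K - K * l * w) = 1 + k * K * (1 - l * w) by ring, h]
  ring

variable {c v' v'' : ℝ}

theorem lower_u_residual_eq (hK : K * (1 - k + α * k) = 1 - α) (hD : 1 - k + α * k ≠ 0)
    (hA : 1 + k * K - K ≠ 0) (hP : 1 + k * K * (1 - l * w) ≠ 0)
    (hE : v'' - c * v' + α / ((1 - k + α * k) * (1 + k * K * (1 - l * w))) *
        (w * (1 - (1 + k * K - l * K) / (1 + k * K - K) * w)) = 0) :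
    K * l * v'' - c * (K * l * v') -
        (K - K * l * w) * (1 - α - (K - K * l * w + w) / (1 + k * (K - K * l * w))) =
      K * w * ((1 - l * w) * (1 - l * (1 - α)) - l * (1 + k * K - K - (1 + k * K - l * K) * w)) /
        (1 + k * K * (1 - l * w)) := by
  rw [E2_reaction_eq hK hD hA, ← eq_neg_iff_add_eq_zero] at hE
  rw [TW_u_reaction_eq hK hP, show K * l * v'' - c * (K * l * v') = K * l * (v'' - c * v') by ring,
    hE]
  set P := 1 + k * K * (1 - l * w)
  field_simp
  ring

theorem lower_v_residual_eq (hK : K * (1 - k + α * k) = 1 - α) (hD : 1 - k + α * k ≠ 0)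
    (hA : 1 + k * K - K ≠ 0) (hP : 1 + k * K * (1 - l * w) ≠ 0)
    (hE : v'' - c * v' + α / ((1 - k + α * k) * (1 + k * K * (1 - l * w))) *
        (w * (1 - (1 + k * K - l * K) / (1 + k * K - K) * w)) = 0) :
    v'' - c * v' + w * (1 - (K - K * l * w + w) / (1 + k * (K - K * l * w))) =
      w ^ 2 * (k * K * (1 - l) / (1 + k * K * (1 - l * w))) := by
  rw [E2_reaction_eq hK hD hA, ← eq_neg_iff_add_eq_zero] at hE
  rw [hE, show 1 + k * (K - K * l * w) = 1 + k * K * (1 - l * w) by ring]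
  set P := 1 + k * K * (1 - l * w) with hPdef
  field_simp
  linear_combination (-w) * hPdef

theorem lower_u_residual_factor_nonneg (hK : K * (1 - k + α * k) = 1 - α) (hα : 0 ≤ α)
    (hα1 : α ≤ 1) (hk : 0 ≤ k) (hl : 0 ≤ l) (hlD : l < 1 - k + α * k) (hw : 0 ≤ w) :
    0 ≤ (1 - l * w) * (1 - l * (1 - α)) - l * (1 + k * K - K - (1 + k * K - l * K) * w) := by
  have hD : 0 < 1 - k + α * k := hl.trans_lt hlD
  have hkα : 0 ≤ k * (1 - α) := mul_nonneg hk (by linarith)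
  have hlα : 0 ≤ 1 - l * (1 - α) := by nlinarith
  have hlead : l * α ≤ (1 - l * (1 - α)) * (1 - k + α * k) := by nlinarith [mul_nonneg hl hkα]
  have key : (1 - k + α * k) *
      ((1 - l * w) * (1 - l * (1 - α)) - l * (1 + k * K - K - (1 + k * K - l * K) * w)) =
      ((1 - l * (1 - α)) * (1 - k + α * k) - l * α) + (1 - l * (1 - α)) * (l * w) * (k * (1 - α)) := by
    linear_combination (l * w) * E2_equilibrium_den_mul hK - l * E2_equilibrium_num_mul hK +
      (l * w * k - l ^ 2 * w) * hK
  refine nonneg_of_mul_nonneg_right ?_ hD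
  rw [key]
  exact add_nonneg (sub_nonneg.2 hlead) (mul_nonneg (mul_nonneg hlα (mul_nonneg hl hw)) hkα)

theorem mul_E2_equilibrium_le_one (hK : 0 ≤ K) (hk : 0 ≤ k) (hl : l ≤ 1)
    (hB : 0 < 1 + k * K - l * K) :
    l * ((1 + k * K - K) / (1 + k * K - l * K)) ≤ 1 := by
  rw [← mul_div_assoc, div_le_one hB]
  nlinarith [mul_nonneg hk hK]

theorem E2_equilibrium_le_one (hK : 0 ≤ K) (hl : l ≤ 1) (hB : 0 < 1 + k * K - l * K) :
    (1 + k * K - K) / (1 + k * K - l * K) ≤ 1 := by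
  rw [div_le_one hB]
  nlinarith

end Reaction

theorem lower_solution_general
    (α k : ℝ) (hα : 0 < α) (hα1 : α < 1) (hk : 0 < k)
    (c : ℝ)
    (l : ℝ) (hl : 0 < l) (hl1 : l < 1 - k + α * k)
    (vc : ℝ → ℝ)
    (hE2 : ∀ ξ : ℝ, deriv (deriv vc) ξ - c * deriv vc ξ +
        α / ((1 - k + α * k) * (1 + k * Kstar α k * (1 - l * vc ξ))) *
          (vc ξ * (1 - (1 + k * Kstar α k - l * Kstar α k) /
              (1 + k * Kstar α k - Kstar α k) * vc ξ)) = 0)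
    (hvc_bot : Tendsto vc atBot (nhds 0))
    (hvc_top : Tendsto vc atTop
      (nhds ((1 + k * Kstar α k - Kstar α k) / (1 + k * Kstar α k - l * Kstar α k))))
    (hrange : ∀ ξ : ℝ, 0 < vc ξ ∧
        vc ξ < (1 + k * Kstar α k - Kstar α k) / (1 + k * Kstar α k - l * Kstar α k)) :
    (∀ ξ : ℝ,
        0 ≤ deriv (deriv (fun x => Kstar α k * l * vc x)) ξ -
            c * deriv (fun x => Kstar α k * l * vc x) ξ -
            (Kstar α k - Kstar α k * l * vc ξ) *
              (1 - α -
                (Kstar α k - Kstar α k * l * vc ξ + vc ξ) /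
                  (1 + k * (Kstar α k - Kstar α k * l * vc ξ)))) ∧
    (∀ ξ : ℝ,
        deriv (deriv vc) ξ - c * deriv vc ξ +
            vc ξ *
              (1 - (Kstar α k - Kstar α k * l * vc ξ + vc ξ) /
                  (1 + k * (Kstar α k - Kstar α k * l * vc ξ))) =
          vc ξ ^ 2 * (k * Kstar α k * (1 - l) / (1 + k * Kstar α k * (1 - l * vc ξ))) ∧
        0 ≤ vc ξ ^ 2 * (k * Kstar α k * (1 - l) / (1 + k * Kstar α k * (1 - l * vc ξ)))) ∧
    Tendsto (fun x => Kstar α k * l * vc x) atBot (nhds 0) ∧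
    Tendsto vc atBot (nhds 0) ∧
    Tendsto (fun x => Kstar α k * l * vc x) atTop
      (nhds (Kstar α k * l *
        ((1 + k * Kstar α k - Kstar α k) / (1 + k * Kstar α k - l * Kstar α k)))) ∧
    Tendsto vc atTop
      (nhds ((1 + k * Kstar α k - Kstar α k) / (1 + k * Kstar α k - l * Kstar α k))) ∧
    Kstar α k * l *
        ((1 + k * Kstar α k - Kstar α k) / (1 + k * Kstar α k - l * Kstar α k)) ≤ Kstar α k ∧
    (1 + k * Kstar α k - Kstar α k) / (1 + k * Kstar α k - l * Kstar α k) ≤ 1 := by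
  have hD : 0 < 1 - k + α * k := hl.trans hl1
  have hK : Kstar α k * (1 - k + α * k) = 1 - α := div_mul_cancel₀ _ hD.ne'
  have hK0 : 0 < Kstar α k := div_pos (sub_pos.2 hα1) hD
  have hl1' : l ≤ 1 := by nlinarith
  have hA : 0 < 1 + k * Kstar α k - Kstar α k :=
    pos_of_mul_pos_left ((E2_equilibrium_num_mul hK).symm ▸ hα) hD.le
  have hB : 0 < 1 + k * Kstar α k - l * Kstar α k :=
    pos_of_mul_pos_left ((E2_equilibrium_den_mul hK).symm ▸ by nlinarith) hD.le
  have hP : ∀ ξ, 0 < 1 + k * Kstar α k * (1 - l * vc ξ) := fun ξ => by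
    have : l * vc ξ ≤ 1 := (mul_le_mul_of_nonneg_left (hrange ξ).2.le hl.le).trans
      (mul_E2_equilibrium_le_one hK0.le hk.le hl1' hB)
    nlinarith [mul_pos hk hK0]
  refine ⟨fun ξ => ?_, fun ξ => ?_, by simpa using hvc_bot.const_mul (Kstar α k * l), hvc_bot,
    hvc_top.const_mul _, hvc_top, ?_, E2_equilibrium_le_one hK0.le hl1' hB⟩
  · simp only [deriv_const_mul_field']
    rw [lower_u_residual_eq hK hD.ne' hA.ne' (hP ξ).ne' (hE2 ξ)]
    exact div_nonneg (mul_nonneg (mul_nonneg hK0.le (hrange ξ).1.le)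
      (lower_u_residual_factor_nonneg hK hα.le hα1.le hk.le hl.le hl1 (hrange ξ).1.le)) (hP ξ).le
  · refine ⟨lower_v_residual_eq hK hD.ne' hA.ne' (hP ξ).ne' (hE2 ξ), ?_⟩
    have : 0 ≤ k * Kstar α k * (1 - l) := by nlinarith [mul_pos hk hK0]
    exact mul_nonneg (sq_nonneg _) (div_nonneg this (hP ξ).le)
  · rw [mul_assoc]
    exact mul_le_of_le_one_right hK0.le (mul_E2_equilibrium_le_one hK0.le hk.le hl1' hB)

theorem lower_solution
    (α k : ℝ) (hα : 0 < α) (hα1 : α < 1) (hk : 0 < k) (hk1 : k < 1)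
    (c : ℝ) (hc : 2 * Real.sqrt α ≤ c)
    (l : ℝ) (hl : 0 < l) (hl1 : l < 1 - k + α * k)
    (vc : ℝ → ℝ) (hvcC2 : ContDiff ℝ 2 vc)
    (hE2 : ∀ ξ : ℝ, deriv (deriv vc) ξ - c * deriv vc ξ +
        α / ((1 - k + α * k) * (1 + k * Kstar α k * (1 - l * vc ξ))) *
          (vc ξ * (1 - (1 + k * Kstar α k - l * Kstar α k) /
              (1 + k * Kstar α k - Kstar α k) * vc ξ)) = 0)
    (hvc_bot : Tendsto vc atBot (nhds 0))
    (hvc_top : Tendsto vc atTop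
      (nhds ((1 + k * Kstar α k - Kstar α k) / (1 + k * Kstar α k - l * Kstar α k))))
    (hrange : ∀ ξ : ℝ, 0 < vc ξ ∧
        vc ξ < (1 + k * Kstar α k - Kstar α k) / (1 + k * Kstar α k - l * Kstar α k)) :
    (∀ ξ : ℝ,
        0 ≤ deriv (deriv (fun x => Kstar α k * l * vc x)) ξ -
            c * deriv (fun x => Kstar α k * l * vc x) ξ -
            (Kstar α k - Kstar α k * l * vc ξ) *
              (1 - α -
                (Kstar α k - Kstar α k * l * vc ξ + vc ξ) /
                  (1 + k * (Kstar α k - Kstar α k * l * vc ξ)))) ∧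
    (∀ ξ : ℝ,
        deriv (deriv vc) ξ - c * deriv vc ξ +
            vc ξ *
              (1 - (Kstar α k - Kstar α k * l * vc ξ + vc ξ) /
                  (1 + k * (Kstar α k - Kstar α k * l * vc ξ))) =
          vc ξ ^ 2 * (k * Kstar α k * (1 - l) / (1 + k * Kstar α k * (1 - l * vc ξ))) ∧
        0 ≤ vc ξ ^ 2 * (k * Kstar α k * (1 - l) / (1 + k * Kstar α k * (1 - l * vc ξ)))) ∧
    Tendsto (fun x => Kstar α k * l * vc x) atBot (nhds 0) ∧
    Tendsto vc atBot (nhds 0) ∧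
    Tendsto (fun x => Kstar α k * l * vc x) atTop
      (nhds (Kstar α k * l *
        ((1 + k * Kstar α k - Kstar α k) / (1 + k * Kstar α k - l * Kstar α k)))) ∧
    Tendsto vc atTop
      (nhds ((1 + k * Kstar α k - Kstar α k) / (1 + k * Kstar α k - l * Kstar α k))) ∧
    Kstar α k * l *
        ((1 + k * Kstar α k - Kstar α k) / (1 + k * Kstar α k - l * Kstar α k)) ≤ Kstar α k ∧
    (1 + k * Kstar α k - Kstar α k) / (1 + k * Kstar α k - l * Kstar α k) ≤ 1 :=
  lower_solution_general α k hα hα1 hk c l hl hl1 vc hE2 hvc_bot hvc_top hrange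
end

section
/- Fix c ≥ 2√α. Let v̄ : ℝ → ℝ be a monotonically increasing C² solution of equation (E1) with speed c satisfying 0 < v̄ < 1, and, for a fixed l with 0 < l < 1 - k + α k, let v̌ : ℝ → ℝ be a monotonically increasing C² solution of equation (E2) with speed c satisfying 0 < v̌ < (1 + kK* - K*)/(1 + kK* - lK*). Then there exists a number r ≥ 0 such that K*·v̄(ξ + r) ≥ K*·l·v̌(ξ) and v̄(ξ + r) ≥ v̌(ξ) for all ξ ∈ ℝ; that is, the shifted upper solution (K* v̄, v̄)(· + r) dominates the lower solution (K* l v̌, v̌) componentwise on ℝ. -/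
open Filter

/-!
Write `c = p + q` and `α = p q` with `0 < p ≤ q`, which is possible because `c ≥ 2√α`. Each
profile then solves `(D - p)(D - q) v = h`, where the forcing `h` is `α v` minus the reaction term.

For `v̄` the reaction lies strictly below `α v̄`, so `h > 0`. Then `e^{-qξ} (v̄' - p v̄)` is
increasing, and since `v̄` is bounded it is negative. This gives `v̄(ξ) ≥ v̄(0) e^{pξ}` for `ξ ≤ 0`,
and `v̄(ξ) ≥ (v̄(0) + b|ξ|) e^{pξ}` with `b > 0` when `p = q`.

For `v̌` the forcing is only `O(v̌²)`. A Riccati argument for `v̌'/v̌` first gives decay faster than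
`e^{(p/2)ξ}`. That makes the forcing small enough to integrate twice against the exponential
weights, giving the matching upper bound `v̌(ξ) ≤ A e^{pξ}` (resp. `(A + B|ξ|) e^{pξ}`).

Since `e^{pr}` outgrows every affine function of `r`, `v̄(· + r)` dominates `v̌` on the left tail
once `r` is large. Elsewhere it is enough that `v̌` is small near `-∞` and that `v̄ → 1 > sup v̌`
at `+∞`.
-/

open Set Real Topology

theorem hasDerivAt_exp_mul (a x : ℝ) : HasDerivAt (fun y => exp (a * y)) (a * exp (a * x)) x := by
  simpa [mul_comm] using ((hasDerivAt_id x).const_mul a).exp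

theorem hasDerivAt_exp_mul_mul {v : ℝ → ℝ} {d x : ℝ} (a : ℝ) (hv : HasDerivAt v d x) :
    HasDerivAt (fun y => exp (a * y) * v y) (exp (a * x) * (d + a * v x)) x :=
  ((hasDerivAt_exp_mul a x).mul hv).congr_deriv (by ring)

theorem sub_le_sub_of_hasDerivAt_le {f f' g g' : ℝ → ℝ} {a b : ℝ} (hab : a ≤ b)
    (hf : ∀ x, HasDerivAt f (f' x) x) (hg : ∀ x, HasDerivAt g (g' x) x)
    (hle : ∀ x ∈ Ico a b, f' x ≤ g' x) : f b - f a ≤ g b - g a := by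
  have hB : ∀ x, HasDerivAt (fun y => f a + (g y - g a)) (g' x) x := fun x =>
    ((hg x).sub_const (g a)).const_add (f a)
  have := image_le_of_deriv_right_le_deriv_boundary
    (fun x _ => (hf x).continuousAt.continuousWithinAt) (fun x _ => (hf x).hasDerivWithinAt)
    (by simp) (fun x _ => (hB x).continuousAt.continuousWithinAt)
    (fun x _ => (hB x).hasDerivWithinAt) hle (right_mem_Icc.2 hab)
  linarith

theorem le_mul_exp_of_mul_le_deriv {v v' : ℝ → ℝ} (hv : ∀ x, HasDerivAt v (v' x) x)
    {μ x T : ℝ} (hxT : x ≤ T) (hμ : ∀ y ∈ Ico x T, μ * v y ≤ v' y) :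
    v x ≤ v T * exp (μ * (x - T)) := by
  have := sub_le_sub_of_hasDerivAt_le hxT (fun y => hasDerivAt_const y 0)
    (fun y => hasDerivAt_exp_mul_mul (-μ) (hv y)) fun y hy => by
      nlinarith [hμ y hy, exp_pos (-μ * y)]
  have hx : exp (-μ * x) * v x * exp (μ * x) = v x := by
    rw [mul_right_comm, ← exp_add]; simp
  have hT : exp (-μ * T) * v T * exp (μ * x) = v T * exp (μ * (x - T)) := by
    rw [mul_right_comm, ← exp_add, mul_comm]; ring_nf
  nlinarith [exp_pos (μ * x)]

theorem mul_exp_le_of_deriv_le_mul {v v' : ℝ → ℝ} (hv : ∀ x, HasDerivAt v (v' x) x)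
    {μ x T : ℝ} (hxT : x ≤ T) (hμ : ∀ y ∈ Ico x T, v' y ≤ μ * v y) :
    v T * exp (μ * (x - T)) ≤ v x := by
  have := le_mul_exp_of_mul_le_deriv (v := fun y => -v y) (μ := μ) (fun y => (hv y).neg) hxT
    fun y hy => by linarith [hμ y hy]
  linarith

/-- `v'' - (p + q) v' + p q v = h`, i.e. `(D - p)(D - q) v = h`, with `v'` the derivative of `v`. -/
structure SolvesFactoredODE (p q : ℝ) (v v' h : ℝ → ℝ) : Prop where
  hasDerivAt : ∀ x, HasDerivAt v (v' x) x
  hasDerivAt_deriv : ∀ x, HasDerivAt v' ((p + q) * v' x - p * q * v x + h x) x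

namespace SolvesFactoredODE

variable {p q : ℝ} {v v' h : ℝ → ℝ}

theorem hasDerivAt_exp_mul_sub (hs : SolvesFactoredODE p q v v' h) (x : ℝ) :
    HasDerivAt (fun y => exp (-q * y) * (v' y - p * v y)) (exp (-q * x) * h x) x :=
  (hasDerivAt_exp_mul_mul (-q)
    ((hs.hasDerivAt_deriv x).fun_sub ((hs.hasDerivAt x).const_mul p))).congr_deriv (by ring)

/-- `s = v' / v` solves `s' = -(s - p)(s - q) + h / v`, so while `s < μ` and `C v` is small it
decreases at a fixed rate; started far enough to the left it would become negative. -/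
theorem eventually_mul_le_deriv (hs : SolvesFactoredODE p q v v' h) {C μ : ℝ} (hpq : p ≤ q)
    (hμ : 0 < μ) (hμp : μ < p) (hpos : ∀ x, 0 < v x) (hv' : ∀ x, 0 ≤ v' x)
    (hbot : Tendsto v atBot (𝓝 0)) (hh : ∀ x, h x ≤ C * v x ^ 2) :
    ∀ᶠ x in atBot, μ * v x ≤ v' x := by
  set d := p - μ with hd_def
  have hd : 0 < d := sub_pos.2 hμp
  obtain ⟨T₁, hT₁⟩ : ∃ T₁, ∀ x ≤ T₁, C * v x ≤ d ^ 2 / 2 := by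
    refine eventually_atBot.1 ((hbot.const_mul C).eventually (eventually_le_nhds ?_))
    rw [mul_zero]; positivity
  set s' : ℝ → ℝ := fun x =>
    (((p + q) * v' x - p * q * v x + h x) * v x - v' x * v' x) / v x ^ 2
  have hsd : ∀ x, HasDerivAt (fun y => v' y / v y) (s' x) x := fun x =>
    (hs.hasDerivAt_deriv x).div (hs.hasDerivAt x) (hpos x).ne'
  have hdrop : ∀ x ≤ T₁, v' x / v x < μ → s' x < -(d ^ 2 / 4) := by
    intro x hx hsx
    have hvx := hpos x
    rw [div_lt_iff₀ hvx] at hsx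
    rw [div_lt_iff₀ (by positivity)]
    have hp : d * v x ≤ p * v x - v' x := by rw [hd_def]; linarith
    have hq : d * v x ≤ q * v x - v' x := by rw [hd_def]; nlinarith
    nlinarith [mul_le_mul hp hq (by positivity) (le_trans (by positivity) hp),
      mul_le_mul_of_nonneg_left (hT₁ x hx) (sq_nonneg (v x)),
      mul_le_mul_of_nonneg_right (hh x) hvx.le, mul_pos (pow_pos hd 2) (pow_pos hvx 2)]
  refine eventually_atBot.2 ⟨T₁ - 4 * μ / d ^ 2, fun x hx => ?_⟩
  by_contra! hlt
  have hgap : μ ≤ d ^ 2 / 4 * (T₁ - x) := by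
    have : 4 * μ / d ^ 2 ≤ T₁ - x := by linarith
    rw [div_le_iff₀ (by positivity)] at this; linarith
  have hxT : x ≤ T₁ := by nlinarith
  have hB : ∀ y, HasDerivAt (fun z => v' x / v x - d ^ 2 / 4 * (z - x)) (-(d ^ 2 / 4)) y :=
    fun y => by
      simpa using (((hasDerivAt_id y).sub_const x).const_mul (d ^ 2 / 4)).const_sub (v' x / v x)
  have hsx : v' x / v x < μ := (div_lt_iff₀ (hpos x)).2 (by linarith)
  have hfence := image_le_of_deriv_right_lt_deriv_boundary
    (fun y _ => (hsd y).continuousAt.continuousWithinAt) (fun y _ => (hsd y).hasDerivWithinAt)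
    (by simp) hB (fun y hy hyB => hdrop y hy.2.le (by rw [hyB]; nlinarith [hy.1, sq_nonneg d]))
    (right_mem_Icc.2 hxT)
  have : 0 ≤ v' T₁ / v T₁ := div_nonneg (hv' _) (hpos _).le
  linarith

theorem exists_forcing_le_exp (hs : SolvesFactoredODE p q v v' h) {C γ : ℝ} (hpq : p ≤ q)
    (hγ : 0 < γ) (hγp : γ < p) (hpos : ∀ x, 0 < v x) (hv' : ∀ x, 0 ≤ v' x)
    (hbot : Tendsto v atBot (𝓝 0)) (hC : 0 ≤ C) (hh : ∀ x, h x ≤ C * v x ^ 2) :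
    ∃ T M, 0 ≤ M ∧ ∀ x ≤ T, h x ≤ M * exp ((p + γ) * x) := by
  set μ := (p + γ) / 2 with hμ
  obtain ⟨T, hT⟩ := eventually_atBot.1 <| hs.eventually_mul_le_deriv (μ := μ) hpq
    (by rw [hμ]; linarith) (by rw [hμ]; linarith) hpos hv' hbot hh
  refine ⟨T, C * (v T * exp (-μ * T)) ^ 2, by positivity, fun x hx => ?_⟩
  have hv : v x ≤ v T * exp (-μ * T) * exp (μ * x) := by
    have := le_mul_exp_of_mul_le_deriv hs.hasDerivAt hx fun y hy => hT y hy.2.le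
    rwa [mul_assoc, ← exp_add, show -μ * T + μ * x = μ * (x - T) by ring]
  have hsq : exp (μ * x) ^ 2 = exp ((p + γ) * x) := by
    rw [← exp_nat_mul]; congr 1; ring
  calc h x ≤ C * v x ^ 2 := hh x
    _ ≤ C * (v T * exp (-μ * T) * exp (μ * x)) ^ 2 :=
      mul_le_mul_of_nonneg_left (pow_le_pow_left₀ (hpos x).le hv 2) hC
    _ = C * (v T * exp (-μ * T)) ^ 2 * exp ((p + γ) * x) := by rw [← hsq]; ring

/-- With `W = e^{-qy} (v' - p v)` one has `W' = e^{-qy} h` and `(e^{-py} v)' = e^{(q - p) y} W`;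
integrating the forcing bound twice keeps `e^{-py} v` bounded because `γ < q - p`. -/
theorem exists_le_mul_exp_of_lt (hs : SolvesFactoredODE p q v v' h) {T M γ : ℝ}
    (hγ : 0 < γ) (hγq : γ < q - p) (hM : 0 ≤ M)
    (hh : ∀ x ≤ T, h x ≤ M * exp ((p + γ) * x)) :
    ∃ A, ∀ x ≤ T, v x ≤ A * exp (p * x) := by
  set W := fun y => exp (-q * y) * (v' y - p * v y)
  set β := q - p - γ
  have hβ : 0 < β := by simp only [β]; linarith
  have hδ : 0 < q - p := by linarith
  have hW : ∀ y ≤ T, W T - M / β * exp (-β * y) ≤ W y := by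
    intro y hy
    have := sub_le_sub_of_hasDerivAt_le hy hs.hasDerivAt_exp_mul_sub
      (fun z => (hasDerivAt_exp_mul (-β) z).const_mul (-(M / β))) fun z hz => by
        have hexp : exp (-q * z) * exp ((p + γ) * z) = exp (-β * z) := by
          rw [← exp_add]; congr 1; simp only [β]; ring
        calc exp (-q * z) * h z ≤ exp (-q * z) * (M * exp ((p + γ) * z)) :=
              mul_le_mul_of_nonneg_left (hh z hz.2.le) (exp_pos _).le
          _ = -(M / β) * (-β * exp (-β * z)) := by
              rw [show -(M / β) * (-β * exp (-β * z)) = M * exp (-β * z) by field_simp, ← hexp]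
              ring
    nlinarith [exp_pos (-β * T), div_nonneg hM hβ.le]
  set G := fun y => |W T| / (q - p) * exp ((q - p) * y) + M / (β * γ) * exp (γ * y)
  have hG : ∀ y, HasDerivAt G (|W T| * exp ((q - p) * y) + M / β * exp (γ * y)) y := fun y =>
    (((hasDerivAt_exp_mul (q - p) y).const_mul (|W T| / (q - p))).add
      ((hasDerivAt_exp_mul γ y).const_mul (M / (β * γ)))).congr_deriv (by field_simp)
  refine ⟨exp (-p * T) * v T + G T, fun x hx => ?_⟩
  have := sub_le_sub_of_hasDerivAt_le hx
    (fun y => (hasDerivAt_exp_mul_mul (-p) (hs.hasDerivAt y)).fun_neg) hG fun y hy => by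
      have hWe : exp (-p * y) * (v' y + -p * v y) = exp ((q - p) * y) * W y := by
        simp only [W]; rw [← mul_assoc, ← exp_add]; ring_nf
      have hexp : exp ((q - p) * y) * exp (-β * y) = exp (γ * y) := by
        rw [← exp_add]; congr 1; simp only [β]; ring
      rw [hWe]
      linear_combination mul_le_mul_of_nonneg_left (hW y hy.2.le) (exp_pos ((q - p) * y)).le +
        mul_le_mul_of_nonneg_left (neg_abs_le (W T)) (exp_pos ((q - p) * y)).le + M / β * hexp
  have hGx : 0 ≤ G x := by positivity
  have hu : exp (-p * x) * v x * exp (p * x) = v x := by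
    rw [mul_right_comm, ← exp_add]; simp
  nlinarith [exp_pos (p * x)]

theorem exists_le_linear_mul_exp (hs : SolvesFactoredODE p p v v' h) {T M γ : ℝ}
    (hγ : 0 < γ) (hM : 0 ≤ M) (hh : ∀ x ≤ T, h x ≤ M * exp ((p + γ) * x)) :
    ∃ A B, ∀ x ≤ T, v x ≤ (A - B * x) * exp (p * x) := by
  set W := fun y => exp (-p * y) * (v' y - p * v y)
  have hW : ∀ y ≤ T, W T - M / γ * exp (γ * T) ≤ W y := by
    intro y hy
    have := sub_le_sub_of_hasDerivAt_le hy hs.hasDerivAt_exp_mul_sub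
      (fun z => (hasDerivAt_exp_mul γ z).const_mul (M / γ)) fun z hz => by
        calc exp (-p * z) * h z ≤ exp (-p * z) * (M * exp ((p + γ) * z)) :=
              mul_le_mul_of_nonneg_left (hh z hz.2.le) (exp_pos _).le
          _ = M / γ * (γ * exp (γ * z)) := by
              rw [mul_left_comm, ← exp_add]; field_simp; ring_nf
    nlinarith [exp_pos (γ * y), div_nonneg hM hγ.le]
  set B := M / γ * exp (γ * T) - W T
  refine ⟨exp (-p * T) * v T + B * T, B, fun x hx => ?_⟩
  have := sub_le_sub_of_hasDerivAt_le hx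
    (fun y => (hasDerivAt_exp_mul_mul (-p) (hs.hasDerivAt y)).fun_neg)
    (fun y => (hasDerivAt_id y).const_mul B) fun y hy => by
      have := hW y hy.2.le
      simp only [W] at this
      simp only [mul_one]
      linarith
  have hu : exp (-p * x) * v x * exp (p * x) = v x := by
    rw [mul_right_comm, ← exp_add]; simp
  simp only [id] at this
  nlinarith [exp_pos (p * x)]

theorem strictMono_exp_mul_sub (hs : SolvesFactoredODE p q v v' h) (hh : ∀ x, 0 < h x) :
    StrictMono fun y => exp (-q * y) * (v' y - p * v y) :=
  strictMono_of_hasDerivAt_pos hs.hasDerivAt_exp_mul_sub fun x => mul_pos (exp_pos _) (hh x)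

/-- Otherwise the increasing function `e^{-qy} (v' - p v)` stays above some `w > 0` on a half-line,
where then `v' ≥ w`, contradicting `v ≤ S`. -/
theorem exp_mul_sub_neg (hs : SolvesFactoredODE p q v v' h) {S : ℝ} (hp : 0 ≤ p) (hq : 0 ≤ q)
    (hpos : ∀ x, 0 < v x) (hS : ∀ x, v x ≤ S) (hh : ∀ x, 0 < h x) (x : ℝ) :
    exp (-q * x) * (v' x - p * v x) < 0 := by
  by_contra! hx
  set w := exp (-q * (x + 1)) * (v' (x + 1) - p * v (x + 1))
  have hw : 0 < w := lt_of_le_of_lt hx (hs.strictMono_exp_mul_sub hh (by linarith))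
  set y₀ := max (x + 1) 0
  have hv' : ∀ y ≥ y₀, w ≤ v' y := by
    intro y hy
    have h1 : w ≤ exp (-q * y) * (v' y - p * v y) :=
      (hs.strictMono_exp_mul_sub hh).monotone (le_trans (le_max_left _ _) hy)
    have h2 : 1 ≤ exp (q * y) := one_le_exp (mul_nonneg hq (le_trans (le_max_right _ _) hy))
    have h3 : exp (q * y) * (exp (-q * y) * (v' y - p * v y)) = v' y - p * v y := by
      rw [← mul_assoc, ← exp_add]; simp
    nlinarith [mul_le_mul_of_nonneg_left h1 (exp_pos (q * y)).le, mul_nonneg hp (hpos y).le]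
  have hSw : 0 ≤ S / w := div_nonneg (le_trans (hpos 0).le (hS 0)) hw.le
  have := sub_le_sub_of_hasDerivAt_le (a := y₀) (b := y₀ + S / w) (le_add_of_nonneg_right hSw)
    (fun y => (hasDerivAt_id y).const_mul w) hs.hasDerivAt fun y hy => by
      simpa using hv' y hy.1
  have hwS : w * (S / w) = S := mul_div_cancel₀ S hw.ne'
  simp only [id] at this
  linarith [hS (y₀ + S / w), hpos y₀]

theorem deriv_lt_mul (hs : SolvesFactoredODE p q v v' h) {S : ℝ} (hp : 0 ≤ p) (hq : 0 ≤ q)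
    (hpos : ∀ x, 0 < v x) (hS : ∀ x, v x ≤ S) (hh : ∀ x, 0 < h x) (x : ℝ) :
    v' x < p * v x := by
  nlinarith [hs.exp_mul_sub_neg hp hq hpos hS hh x, exp_pos (-q * x)]

theorem exists_linear_mul_exp_le (hs : SolvesFactoredODE p p v v' h) {S : ℝ} (hp : 0 ≤ p)
    (hpos : ∀ x, 0 < v x) (hS : ∀ x, v x ≤ S) (hh : ∀ x, 0 < h x) :
    ∃ b, 0 < b ∧ ∀ x ≤ 0, (v 0 - b * x) * exp (p * x) ≤ v x := by
  set W := fun y => exp (-p * y) * (v' y - p * v y)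
  refine ⟨-W 0, by linarith [hs.exp_mul_sub_neg hp hp hpos hS hh 0], fun x hx => ?_⟩
  have := sub_le_sub_of_hasDerivAt_le hx (fun y => hasDerivAt_exp_mul_mul (-p) (hs.hasDerivAt y))
    (fun y => (hasDerivAt_id y).const_mul (W 0)) fun y hy => by
      have := (hs.strictMono_exp_mul_sub hh).monotone hy.2.le
      simp only [mul_one]
      simpa [W, sub_eq_add_neg, neg_mul] using this
  have hu : exp (-p * x) * v x * exp (p * x) = v x := by
    rw [mul_right_comm, ← exp_add]; simp
  simp only [id, mul_zero, exp_zero, one_mul] at this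
  nlinarith [exp_pos (p * x)]

end SolvesFactoredODE

theorem eventually_le_comp_add_of_exp_bounds {f g : ℝ → ℝ} {p A B a b T : ℝ} (hp : 0 < p)
    (ha : 0 < a) (hb : 0 ≤ b) (hBb : B ≤ 0 ∨ 0 < b)
    (hf : ∀ x ≤ T, f x ≤ (A - B * x) * exp (p * x))
    (hg : ∀ x ≤ 0, (a - b * x) * exp (p * x) ≤ g x) :
    ∀ᶠ r in atTop, ∀ x, x + r ≤ 0 → f x ≤ g (x + r) := by
  have hexp : Tendsto (fun r => exp (p * r)) atTop atTop :=
    tendsto_exp_atTop.comp (tendsto_id.const_mul_atTop hp)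
  have hlin : (fun r => A + B * r) =o[atTop] fun r => exp (p * r) := by
    have h0 : (fun _ => A) =o[atTop] fun r => exp (p * r) :=
      Asymptotics.isLittleO_const_left.2 (Or.inr (tendsto_norm_atTop_atTop.comp hexp))
    simpa using h0.add ((isLittleO_pow_exp_pos_mul_atTop 1 hp).const_mul_left B)
  have hBe : ∀ᶠ r in atTop, B ≤ b * exp (p * r) := by
    rcases hBb with hB | hb
    · exact Eventually.of_forall fun r => hB.trans (by positivity)
    · filter_upwards [hexp.eventually_ge_atTop (B / b)] with r hr
      rwa [div_le_iff₀' hb] at hr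
  filter_upwards [hlin.bound ha, hBe, eventually_ge_atTop 0, eventually_ge_atTop (-T)]
    with r hr hBr hr0 hrT x hx
  rw [Real.norm_eq_abs, Real.norm_eq_abs, abs_of_pos (exp_pos _)] at hr
  have hkey : A - B * x ≤ (a - b * (x + r)) * exp (p * r) := by
    nlinarith [le_abs_self (A + B * r), mul_le_mul_of_nonneg_right hBr (by linarith : 0 ≤ -(x + r))]
  calc f x ≤ (A - B * x) * exp (p * x) := hf x (by linarith)
    _ ≤ (a - b * (x + r)) * exp (p * r) * exp (p * x) :=
      mul_le_mul_of_nonneg_right hkey (exp_pos _).le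
    _ = (a - b * (x + r)) * exp (p * (x + r)) := by rw [mul_assoc, ← exp_add]; ring_nf
    _ ≤ g (x + r) := hg (x + r) hx

theorem exists_nonneg_le_comp_add {f g : ℝ → ℝ} {L : ℝ} (hg : Monotone g) (hg0 : 0 < g 0)
    (hfL : ∀ x, f x ≤ L) (hf_bot : Tendsto f atBot (𝓝 0)) (hg_top : ∀ᶠ x in atTop, L < g x)
    (htail : ∀ᶠ r in atTop, ∀ x, x + r ≤ 0 → f x ≤ g (x + r)) :
    ∃ r, 0 ≤ r ∧ ∀ x, f x ≤ g (x + r) := by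
  obtain ⟨T, hT⟩ := eventually_atBot.1 (hf_bot.eventually (eventually_le_nhds hg0))
  obtain ⟨R, hR⟩ := eventually_atTop.1 hg_top
  obtain ⟨r, hr, hr0, hrR⟩ :=
    (htail.and ((eventually_ge_atTop 0).and (eventually_ge_atTop (R - T)))).exists
  refine ⟨r, hr0, fun x => ?_⟩
  rcases le_or_gt (x + r) 0 with hxr | hxr
  · exact hr x hxr
  rcases le_or_gt x T with hxT | hxT
  · exact (hT x hxT).trans (hg hxr.le)
  · exact (hfL x).trans (hR (x + r) (by linarith)).le

theorem SolvesFactoredODE.eventually_le_comp_add {p q C S : ℝ} {v₁ v₁' h₁ v₂ v₂' h₂ : ℝ → ℝ}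
    (hp : 0 < p) (hpq : p ≤ q)
    (hs₁ : SolvesFactoredODE p q v₁ v₁' h₁) (hpos₁ : ∀ x, 0 < v₁ x) (hv₁' : ∀ x, 0 ≤ v₁' x)
    (hbot₁ : Tendsto v₁ atBot (𝓝 0)) (hC : 0 ≤ C) (hh₁ : ∀ x, h₁ x ≤ C * v₁ x ^ 2)
    (hs₂ : SolvesFactoredODE p q v₂ v₂' h₂) (hpos₂ : ∀ x, 0 < v₂ x) (hS : ∀ x, v₂ x ≤ S)
    (hh₂ : ∀ x, 0 < h₂ x) :
    ∀ᶠ r in atTop, ∀ x, x + r ≤ 0 → v₁ x ≤ v₂ (x + r) := by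
  rcases hpq.lt_or_eq with hpq | rfl
  · set γ := min p (q - p) / 2 with hγ
    have hγ0 : 0 < γ := half_pos (lt_min hp (sub_pos.2 hpq))
    have hγp : γ < p := by rw [hγ]; linarith [min_le_left p (q - p)]
    have hγq : γ < q - p := by rw [hγ]; linarith [min_le_right p (q - p)]
    obtain ⟨T, M, hM, hh⟩ :=
      hs₁.exists_forcing_le_exp hpq.le hγ0 hγp hpos₁ hv₁' hbot₁ hC hh₁
    obtain ⟨A, hA⟩ := hs₁.exists_le_mul_exp_of_lt hγ0 hγq hM hh
    refine eventually_le_comp_add_of_exp_bounds (B := 0) (b := 0) hp (hpos₂ 0) le_rfl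
      (Or.inl le_rfl) (fun x hx => by simpa using hA x hx) fun x hx => ?_
    simpa using mul_exp_le_of_deriv_le_mul hs₂.hasDerivAt hx fun y _ =>
      (hs₂.deriv_lt_mul hp.le (hp.trans hpq).le hpos₂ hS hh₂ y).le
  · obtain ⟨T, M, hM, hh⟩ :=
      hs₁.exists_forcing_le_exp le_rfl (half_pos hp) (half_lt_self hp) hpos₁ hv₁' hbot₁ hC hh₁
    obtain ⟨A, B, hAB⟩ := hs₁.exists_le_linear_mul_exp (half_pos hp) hM hh
    obtain ⟨b, hb, hlow⟩ := hs₂.exists_linear_mul_exp_le hp.le hpos₂ hS hh₂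
    exact eventually_le_comp_add_of_exp_bounds hp (hpos₂ 0) hb.le (Or.inr hb) hAB hlow

theorem exists_add_eq_mul_eq_of_two_sqrt_le {α c : ℝ} (hα : 0 < α) (hc : 2 * √α ≤ c) :
    ∃ p q, 0 < p ∧ p ≤ q ∧ p + q = c ∧ p * q = α := by
  have hα' := sqrt_pos.2 hα
  have hc2 : 4 * α ≤ c ^ 2 := by nlinarith [sq_sqrt hα.le]
  set s := √(c ^ 2 - 4 * α)
  have hs : s ^ 2 = c ^ 2 - 4 * α := sq_sqrt (by linarith)
  have hsc : s < c := by nlinarith [sqrt_nonneg (c ^ 2 - 4 * α)]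
  exact ⟨(c - s) / 2, (c + s) / 2, by linarith, by linarith [sqrt_nonneg (c ^ 2 - 4 * α)],
    by ring, by linear_combination -hs / 4⟩

theorem solvesFactoredODE_of_contDiff {p q c : ℝ} {v F : ℝ → ℝ} (hv : ContDiff ℝ 2 v)
    (hc : p + q = c) (heq : ∀ x, deriv (deriv v) x - c * deriv v x + F x = 0) :
    SolvesFactoredODE p q v (deriv v) fun x => p * q * v x - F x where
  hasDerivAt x := (hv.differentiable two_ne_zero x).hasDerivAt
  hasDerivAt_deriv x := (hv.differentiable_deriv_two x).hasDerivAt.congr_deriv <| by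
    rw [← hc] at heq
    linear_combination heq x

section Model

variable {α k l : ℝ}

theorem mul_Kstar (hD : 0 < 1 - k + α * k) : (1 - k + α * k) * Kstar α k = 1 - α :=
  mul_div_cancel₀ _ hD.ne'

theorem reaction_E1_lt (hα : 0 < α) (hD : 0 < 1 - k + α * k) {x : ℝ} (hx0 : 0 < x)
    (hx1 : x < 1) :
    α / ((1 - k + α * k) * (1 + k * Kstar α k * (1 - x))) * (x * (1 - x)) < α * x := by
  have hden : (1 - k + α * k) * (1 + k * Kstar α k * (1 - x)) = 1 - x + (1 - k + α * k) * x := by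
    linear_combination k * (1 - x) * mul_Kstar hD
  rw [hden, div_mul_eq_mul_div, div_lt_iff₀ (by nlinarith)]
  nlinarith [mul_pos (mul_pos (mul_pos hα hx0) hx0) hD]

theorem sub_reaction_E2_le (hα : 0 < α) (hα1 : α < 1) (hk : 0 < k) (hl : 0 < l)
    (hl1 : l < 1 - k + α * k) {x : ℝ} (hx : x ≤ 1) :
    α * x - α / ((1 - k + α * k) * (1 + k * Kstar α k * (1 - l * x))) *
        (x * (1 - (1 + k * Kstar α k - l * Kstar α k) / (1 + k * Kstar α k - Kstar α k) * x)) ≤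
      (1 - l)⁻¹ * x ^ 2 := by
  have hDK := mul_Kstar (hl.trans hl1)
  have hD1 : (1 - k + α * k) * (1 + k * Kstar α k - Kstar α k) = α := by
    linear_combination (k - 1) * hDK
  have hD2 : (1 - k + α * k) * (1 + k * Kstar α k - l * Kstar α k) = 1 - l * (1 - α) := by
    linear_combination (k - l) * hDK
  have hK1 : 1 + k * Kstar α k - Kstar α k ≠ 0 := by
    rintro h0; rw [h0, mul_zero] at hD1; exact hα.ne hD1
  have hq : (1 + k * Kstar α k - l * Kstar α k) / (1 + k * Kstar α k - Kstar α k) =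
      (1 - l * (1 - α)) / α := by
    rw [div_eq_div_iff hK1 hα.ne']
    linear_combination -(1 + k * Kstar α k - l * Kstar α k) * hD1 +
      (1 + k * Kstar α k - Kstar α k) * hD2
  have hden : (1 - k + α * k) * (1 + k * Kstar α k * (1 - l * x)) = 1 - k * l * (1 - α) * x := by
    linear_combination k * (1 - l * x) * hDK
  set m := k * l * (1 - α)
  have hm0 : 0 ≤ m := by positivity
  have hml : m < l := by nlinarith
  have hl_lt : l < 1 := by nlinarith
  have hmx : 0 < 1 - m * x := by nlinarith
  have hmx' : 1 - m * x ≠ 0 := hmx.ne'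
  have key : α * x - α / (1 - m * x) * (x * (1 - (1 - l * (1 - α)) / α * x)) =
      x ^ 2 * (1 - l * (1 - α) - α * m) / (1 - m * x) := by
    rw [eq_div_iff hmx', sub_mul, div_mul_eq_mul_div, div_mul_cancel₀ _ hmx']
    field_simp
    ring
  rw [hq, hden, key, inv_mul_eq_div, div_le_div_iff₀ hmx (by linarith)]
  have : (1 - l * (1 - α) - α * m) * (1 - l) ≤ 1 - m * x := by
    nlinarith [mul_nonneg (mul_nonneg hα.le hm0) (sub_nonneg.2 hl_lt.le),
      mul_nonneg (mul_nonneg hl.le (sub_nonneg.2 hα1.le)) (sub_nonneg.2 hl_lt.le),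
      mul_nonneg hm0 (sub_nonneg.2 hx)]
  nlinarith [mul_le_mul_of_nonneg_left this (sq_nonneg x)]

theorem limit_E2_lt_one (hα : 0 < α) (hα1 : α < 1) (hk : 0 < k) (hl : 0 < l)
    (hl1 : l < 1 - k + α * k) :
    (1 + k * Kstar α k - Kstar α k) / (1 + k * Kstar α k - l * Kstar α k) < 1 := by
  have hD := hl.trans hl1
  have hDK := mul_Kstar hD
  have hK : 0 < Kstar α k := div_pos (by linarith) hD
  have hD2 : (1 - k + α * k) * (1 + k * Kstar α k - l * Kstar α k) = 1 - l * (1 - α) := by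
    linear_combination (k - l) * hDK
  have hl_lt : l < 1 := by nlinarith
  have hpos : 0 < 1 + k * Kstar α k - l * Kstar α k :=
    pos_of_mul_pos_right (hD2 ▸ by nlinarith [mul_lt_mul_of_pos_right hl_lt (sub_pos.2 hα1)]) hD.le
  rw [div_lt_one hpos]
  nlinarith

end Model

theorem ordered_upper_lower_general
    (α k : ℝ) (hα : 0 < α) (hα1 : α < 1) (hk : 0 < k)
    (c : ℝ) (hc : 2 * Real.sqrt α ≤ c)
    (l : ℝ) (hl : 0 < l) (hl1 : l < 1 - k + α * k)
    (vb : ℝ → ℝ) (hvbC2 : ContDiff ℝ 2 vb) (hvb_mono : Monotone vb)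
    (hE1 : ∀ ξ : ℝ, deriv (deriv vb) ξ - c * deriv vb ξ +
        α / ((1 - k + α * k) * (1 + k * Kstar α k * (1 - vb ξ))) * (vb ξ * (1 - vb ξ)) = 0)
    (hvb_top : Tendsto vb atTop (nhds 1))
    (hvb_range : ∀ ξ : ℝ, 0 < vb ξ ∧ vb ξ < 1)
    (vc : ℝ → ℝ) (hvcC2 : ContDiff ℝ 2 vc) (hvc_mono : Monotone vc)
    (hE2 : ∀ ξ : ℝ, deriv (deriv vc) ξ - c * deriv vc ξ +
        α / ((1 - k + α * k) * (1 + k * Kstar α k * (1 - l * vc ξ))) *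
          (vc ξ * (1 - (1 + k * Kstar α k - l * Kstar α k) /
              (1 + k * Kstar α k - Kstar α k) * vc ξ)) = 0)
    (hvc_bot : Tendsto vc atBot (nhds 0))
    (hvc_range : ∀ ξ : ℝ, 0 < vc ξ ∧
        vc ξ < (1 + k * Kstar α k - Kstar α k) / (1 + k * Kstar α k - l * Kstar α k)) :
    ∃ r : ℝ, 0 ≤ r ∧
      ∀ ξ : ℝ, Kstar α k * l * vc ξ ≤ Kstar α k * vb (ξ + r) ∧ vc ξ ≤ vb (ξ + r) := by
  have hD : 0 < 1 - k + α * k := hl.trans hl1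
  have hl_lt : l < 1 := by nlinarith
  have hLq := limit_E2_lt_one hα hα1 hk hl hl1
  obtain ⟨p, q, hp, hpq, hsum, hprod⟩ := exists_add_eq_mul_eq_of_two_sqrt_le hα hc
  have hsb := solvesFactoredODE_of_contDiff hvbC2 hsum hE1
  have hsc := solvesFactoredODE_of_contDiff hvcC2 hsum hE2
  have htail := hsc.eventually_le_comp_add hp hpq (fun x => (hvc_range x).1)
    (fun x => hvc_mono.deriv_nonneg) hvc_bot (inv_nonneg.2 (sub_nonneg.2 hl_lt.le))
    (fun x => by
      rw [hprod]; exact sub_reaction_E2_le hα hα1 hk hl hl1 ((hvc_range x).2.trans hLq).le)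
    hsb (fun x => (hvb_range x).1) (fun x => (hvb_range x).2.le)
    (fun x => by rw [hprod]; exact sub_pos.2 (reaction_E1_lt hα hD (hvb_range x).1 (hvb_range x).2))
  obtain ⟨r, hr0, hr⟩ := exists_nonneg_le_comp_add hvb_mono (hvb_range 0).1
    (fun x => (hvc_range x).2.le) hvc_bot (hvb_top.eventually (eventually_gt_nhds hLq)) htail
  refine ⟨r, hr0, fun ξ => ⟨?_, hr ξ⟩⟩
  have hK : 0 < Kstar α k := div_pos (by linarith) hD
  rw [mul_assoc]
  exact mul_le_mul_of_nonneg_left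
    ((mul_le_of_le_one_left (hvc_range ξ).1.le hl_lt.le).trans (hr ξ)) hK.le

theorem ordered_upper_lower
    (α k : ℝ) (hα : 0 < α) (hα1 : α < 1) (hk : 0 < k) (hk1 : k < 1)
    (c : ℝ) (hc : 2 * Real.sqrt α ≤ c)
    (l : ℝ) (hl : 0 < l) (hl1 : l < 1 - k + α * k)
    (vb : ℝ → ℝ) (hvbC2 : ContDiff ℝ 2 vb) (hvb_mono : Monotone vb)
    (hE1 : ∀ ξ : ℝ, deriv (deriv vb) ξ - c * deriv vb ξ +
        α / ((1 - k + α * k) * (1 + k * Kstar α k * (1 - vb ξ))) * (vb ξ * (1 - vb ξ)) = 0)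
    (hvb_bot : Tendsto vb atBot (nhds 0)) (hvb_top : Tendsto vb atTop (nhds 1))
    (hvb_range : ∀ ξ : ℝ, 0 < vb ξ ∧ vb ξ < 1)
    (vc : ℝ → ℝ) (hvcC2 : ContDiff ℝ 2 vc) (hvc_mono : Monotone vc)
    (hE2 : ∀ ξ : ℝ, deriv (deriv vc) ξ - c * deriv vc ξ +
        α / ((1 - k + α * k) * (1 + k * Kstar α k * (1 - l * vc ξ))) *
          (vc ξ * (1 - (1 + k * Kstar α k - l * Kstar α k) /
              (1 + k * Kstar α k - Kstar α k) * vc ξ)) = 0)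
    (hvc_bot : Tendsto vc atBot (nhds 0))
    (hvc_top : Tendsto vc atTop
      (nhds ((1 + k * Kstar α k - Kstar α k) / (1 + k * Kstar α k - l * Kstar α k))))
    (hvc_range : ∀ ξ : ℝ, 0 < vc ξ ∧
        vc ξ < (1 + k * Kstar α k - Kstar α k) / (1 + k * Kstar α k - l * Kstar α k)) :
    ∃ r : ℝ, 0 ≤ r ∧
      ∀ ξ : ℝ, Kstar α k * l * vc ξ ≤ Kstar α k * vb (ξ + r) ∧ vc ξ ≤ vb (ξ + r) :=
  ordered_upper_lower_general α k hα hα1 hk c hc l hl hl1 vb hvbC2 hvb_mono hE1 hvb_top hvb_range vc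
    hvcC2 hvc_mono hE2 hvc_bot hvc_range
end

section
/- Let c > 2√α and let σ₁, σ₂ be real numbers satisfying 0 ≤ σ₁ < (-c + √(c² + 4α))/2 and (c - √(c² - 4α))/2 < σ₂ < (c + √(c² - 4α))/2. Then max{ σ₁² + cσ₁ - α, σ₁² + cσ₁ - 1, σ₂² - cσ₂ - (1 - α)(1 - k + kα), σ₂² - cσ₂ + α } < 0; in particular all four quantities are strictly negative, so the essential spectrum of the weighted linearized operator lies in the open left half complex plane. -/
/-- The suprema of the real parts of the essential-spectrum curves of the weighted
linearized operator at `±∞` are all strictly negative. -/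
theorem essential_spectrum_in_left_half_plane
    (α k : ℝ) (hα : 0 < α) (hα1 : α < 1) (hk : 0 < k) (hk1 : k < 1)
    (c : ℝ) (hc : 2 * Real.sqrt α < c)
    (σ₁ σ₂ : ℝ) (hσ₁0 : 0 ≤ σ₁) (hσ₁ : σ₁ < (-c + Real.sqrt (c ^ 2 + 4 * α)) / 2)
    (hσ₂l : (c - Real.sqrt (c ^ 2 - 4 * α)) / 2 < σ₂)
    (hσ₂u : σ₂ < (c + Real.sqrt (c ^ 2 - 4 * α)) / 2) :
    max (max (σ₁ ^ 2 + c * σ₁ - α) (σ₁ ^ 2 + c * σ₁ - 1))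
      (max (σ₂ ^ 2 - c * σ₂ - (1 - α) * (1 - k + k * α)) (σ₂ ^ 2 - c * σ₂ + α)) < 0 := by
  have hα0 : 0 ≤ α := hα.le
  have hsa : 0 < Real.sqrt α := Real.sqrt_pos.mpr hα
  have hc0 : 0 < c := lt_trans (by positivity) hc
  have hc2 : 4 * α < c ^ 2 := by
    nlinarith [Real.sq_sqrt hα0, Real.sqrt_nonneg α]
  set s := Real.sqrt (c ^ 2 + 4 * α) with hs
  have hs2 : s ^ 2 = c ^ 2 + 4 * α := Real.sq_sqrt (by positivity)
  have hs0 : 0 ≤ s := Real.sqrt_nonneg _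
  set t := Real.sqrt (c ^ 2 - 4 * α) with ht
  have ht2 : t ^ 2 = c ^ 2 - 4 * α := Real.sq_sqrt (by nlinarith)
  have ht0 : 0 ≤ t := Real.sqrt_nonneg _
  have h1 : σ₁ ^ 2 + c * σ₁ - α < 0 := by
    nlinarith [mul_pos (show (0:ℝ) < s - (2 * σ₁ + c) by linarith)
      (show (0:ℝ) < s + (2 * σ₁ + c) by linarith)]
  have h4 : σ₂ ^ 2 - c * σ₂ + α < 0 := by
    nlinarith [mul_pos (show (0:ℝ) < 2 * σ₂ - c + t by linarith)
      (show (0:ℝ) < c + t - 2 * σ₂ by linarith)]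
  have hP : 0 < (1 - α) * (1 - k + k * α) := mul_pos (by linarith) (by nlinarith)
  simp only [max_lt_iff]
  exact ⟨⟨h1, by linarith⟩, ⟨by nlinarith, h4⟩⟩
end
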